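/- (Derivative lemma.) Let P, Q ∈ nCSP. (i) If ⟦P⟧ ==τ̂==> ⟦Q⟧ then P ⊑_Emust Q and Q ⊑_Emay P. (ii) If ⟦P⟧ ==â==> ⟦Q⟧ (a ∈ Act) then a.Q ⊑_Emay P. -/

import Mathlib

open Classical

noncomputable section

namespace PaperPCSP

/-! ### Finitely supported distributions as weight functions -/

/-- Weight functions on `X`; probability distributions are those satisfying `IsDist`. -/
abbrev Wt (X : Type) := X → ℝ

/-- The support of a weight function. -/
def dsupp {X : Type} (Δ : Wt X) : Set X := Function.support Δ

/-- `Δ` is a finitely supported probability distribution. -/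
def IsDist {X : Type} (Δ : Wt X) : Prop :=
  (∀ x, 0 ≤ Δ x) ∧ (dsupp Δ).Finite ∧ ∑ᶠ x, Δ x = 1

/-- The point distribution at `x`. -/
def dirac {X : Type} (x : X) : Wt X := fun y => if y = x then 1 else 0

/-- Pushforward of a weight function along a map. -/
def dmap {X Y : Type} (g : X → Y) (Δ : Wt X) : Wt Y :=
  fun y => ∑ᶠ x ∈ {x | g x = y}, Δ x

/-- Expected value of `f` under `Δ`. -/
def dexp {X : Type} (Δ : Wt X) (f : X → ℝ) : ℝ := ∑ᶠ x, Δ x * f x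

/-! ### Syntax of pCSP -/

mutual
/-- Process terms of pCSP (over prefix alphabet `A`). -/
inductive PCSP (A : Type) : Type where
  | st : SCSP A → PCSP A
  | pch : ℝ → PCSP A → PCSP A → PCSP A
/-- State-based process terms of pCSP. -/
inductive SCSP (A : Type) : Type where
  | nil : SCSP A
  | pre : A → PCSP A → SCSP A
  | ich : PCSP A → PCSP A → SCSP A
  | ech : SCSP A → SCSP A → SCSP A
  | par : Set A → SCSP A → SCSP A → SCSP A
end

mutual
/-- Well-formedness: all probabilistic choices have `p ∈ (0,1)`.  `pCSP` proper
consists of the well-formed terms. -/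
inductive PWF : {A : Type} → PCSP A → Prop where
  | st {A} {s : SCSP A} : SWF s → PWF (.st s)
  | pch {A} {p : ℝ} {P Q : PCSP A} : 0 < p → p < 1 → PWF P → PWF Q → PWF (.pch p P Q)
inductive SWF : {A : Type} → SCSP A → Prop where
  | nil {A} : SWF (SCSP.nil (A := A))
  | pre {A} {a : A} {P} : PWF P → SWF (.pre a P)
  | ich {A} {P Q : PCSP A} : PWF P → PWF Q → SWF (.ich P Q)
  | ech {A} {s t : SCSP A} : SWF s → SWF t → SWF (.ech s t)
  | par {A} {B : Set A} {s t : SCSP A} : SWF s → SWF t → SWF (.par B s t)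
end

/-- Interpretation of process terms as distributions over state-based terms. -/
def PCSP.interp {A : Type} : PCSP A → Wt (SCSP A)
  | .st s => dirac s
  | .pch p P Q => fun t => p * P.interp t + (1 - p) * Q.interp t

/-! ### Operational semantics -/

/-- The probabilistic labelled transition relation; `none` is the internal action τ. -/
inductive Step {A : Type} : SCSP A → Option A → Wt (SCSP A) → Prop where
  | pre (a : A) (P : PCSP A) : Step (.pre a P) (some a) P.interp
  | ichL (P Q : PCSP A) : Step (.ich P Q) none P.interp
  | ichR (P Q : PCSP A) : Step (.ich P Q) none Q.interp
  | echL {s₁ s₂ : SCSP A} {a : A} {Δ} :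
      Step s₁ (some a) Δ → Step (.ech s₁ s₂) (some a) Δ
  | echR {s₁ s₂ : SCSP A} {a : A} {Δ} :
      Step s₂ (some a) Δ → Step (.ech s₁ s₂) (some a) Δ
  | echTL {s₁ s₂ : SCSP A} {Δ} :
      Step s₁ none Δ → Step (.ech s₁ s₂) none (dmap (fun t => .ech t s₂) Δ)
  | echTR {s₁ s₂ : SCSP A} {Δ} :
      Step s₂ none Δ → Step (.ech s₁ s₂) none (dmap (fun t => .ech s₁ t) Δ)
  | parL {B : Set A} {s₁ s₂ : SCSP A} {α : Option A} {Δ} :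
      Step s₁ α Δ → (∀ a, α = some a → a ∉ B) →
      Step (.par B s₁ s₂) α (dmap (fun t => .par B t s₂) Δ)
  | parR {B : Set A} {s₁ s₂ : SCSP A} {α : Option A} {Δ} :
      Step s₂ α Δ → (∀ a, α = some a → a ∉ B) →
      Step (.par B s₁ s₂) α (dmap (fun t => .par B s₁ t) Δ)
  | parS {B : Set A} {s₁ s₂ : SCSP A} {a : A} {Δ₁ Δ₂} :
      a ∈ B → Step s₁ (some a) Δ₁ → Step s₂ (some a) Δ₂ →
      Step (.par B s₁ s₂) none
        (dmap (fun q : SCSP A × SCSP A => .par B q.1 q.2) (fun q => Δ₁ q.1 * Δ₂ q.2))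

/-! ### Lifting relations to distributions, weak transitions -/

/-- Lifting of a state-vs-distribution relation to distributions. -/
def Lift {A : Type} (R : SCSP A → Wt (SCSP A) → Prop) (Δ Θ : Wt (SCSP A)) : Prop :=
  ∃ (n : ℕ) (p : Fin n → ℝ) (s : Fin n → SCSP A) (Φ : Fin n → Wt (SCSP A)),
    (∀ i, 0 ≤ p i) ∧ (∑ i, p i = 1) ∧
    (Δ = fun t => ∑ i, p i * dirac (s i) t) ∧
    (∀ i, R (s i) (Φ i)) ∧
    (Θ = fun t => ∑ i, p i * Φ i t)

/-- The transition relation lifted to distributions. -/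
def StepD {A : Type} (α : Option A) : Wt (SCSP A) → Wt (SCSP A) → Prop :=
  Lift (fun s Δ => Step s α Δ)

/-- `s --τ̂--> Δ` : a τ-step or staying put. -/
def stepTauHat {A : Type} (s : SCSP A) (Δ : Wt (SCSP A)) : Prop :=
  Step s none Δ ∨ Δ = dirac s

/-- `==τ̂==>` : reflexive-transitive closure of the lifted `--τ̂-->`. -/
def TauStar {A : Type} : Wt (SCSP A) → Wt (SCSP A) → Prop :=
  Relation.ReflTransGen (Lift stepTauHat)

/-- `Δ ==â==> Θ` for a visible action `a`. -/
def WeakA {A : Type} (a : A) (Δ Θ : Wt (SCSP A)) : Prop :=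
  ∃ Δ₁ Δ₂, TauStar Δ Δ₁ ∧ StepD (some a) Δ₁ Δ₂ ∧ TauStar Δ₂ Θ

/-- `Δ ==α̂==> Θ`, which is `==τ̂==>` when `α = τ`. -/
def Weak {A : Type} : Option A → Wt (SCSP A) → Wt (SCSP A) → Prop
  | none => TauStar
  | some a => WeakA a

/-- `s ↛X` : the state `s` enables no action from `X ∪ {τ}`. -/
def SRefuses {A : Type} (s : SCSP A) (X : Set A) : Prop :=
  (∀ Δ, ¬ Step s none Δ) ∧ ∀ a ∈ X, ∀ Δ, ¬ Step s (some a) Δ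

/-- `Δ ↛X` : every state in the support of `Δ` refuses `X`. -/
def DRefuses {A : Type} (Δ : Wt (SCSP A)) (X : Set A) : Prop :=
  ∀ s ∈ dsupp Δ, SRefuses s X

/-! ### Simulation and failure simulation -/

/-- `R` is a simulation. -/
def IsSimulation {A : Type} (R : SCSP A → Wt (SCSP A) → Prop) : Prop :=
  ∀ s Θ α Δ, R s Θ → Step s α Δ → ∃ Θ', Weak α Θ Θ' ∧ Lift R Δ Θ'

/-- `R` is a failure simulation. -/
def IsFailureSim {A : Type} (R : SCSP A → Wt (SCSP A) → Prop) : Prop :=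
  IsSimulation R ∧
  ∀ s Θ (X : Set A), R s Θ → SRefuses s X → ∃ Θ', TauStar Θ Θ' ∧ DRefuses Θ' X

/-- `s ⊲_S Θ`. -/
def simLE {A : Type} (s : SCSP A) (Θ : Wt (SCSP A)) : Prop :=
  ∃ R, IsSimulation R ∧ R s Θ

/-- `s ⊲_FS Θ`. -/
def fsimLE {A : Type} (s : SCSP A) (Θ : Wt (SCSP A)) : Prop :=
  ∃ R, IsFailureSim R ∧ R s Θ

/-- The simulation preorder `P ⊑_S Q`. -/
def SimPre {A : Type} (P Q : PCSP A) : Prop :=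
  ∃ Θ, TauStar Q.interp Θ ∧ Lift simLE P.interp Θ

/-- The failure simulation preorder `P ⊑_FS Q`. -/
def FSimPre {A : Type} (P Q : PCSP A) : Prop :=
  ∃ Θ, TauStar P.interp Θ ∧ Lift fsimLE Q.interp Θ
/-! ### Syntactic operations: renaming, and ◻ / ∥ distributed over probabilistic choice -/

mutual
/-- Renaming of actions in a process term. -/
def mapP {A B : Type} (f : A → B) : PCSP A → PCSP B
  | .st s => .st (mapS f s)
  | .pch p P Q => .pch p (mapP f P) (mapP f Q)
def mapS {A B : Type} (f : A → B) : SCSP A → SCSP B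
  | .nil => .nil
  | .pre a P => .pre (f a) (mapP f P)
  | .ich P Q => .ich (mapP f P) (mapP f Q)
  | .ech s t => .ech (mapS f s) (mapS f t)
  | .par X s t => .par (f '' X) (mapS f s) (mapS f t)
end

/-- `s ∥_B Q` for a state `s`, distributing over probabilistic choice. -/
def parCS {A : Type} (B : Set A) (s : SCSP A) : PCSP A → PCSP A
  | .st t => .st (.par B s t)
  | .pch p Q₁ Q₂ => .pch p (parCS B s Q₁) (parCS B s Q₂)

/-- `P ∥_B Q` on processes, distributing over probabilistic choice. -/
def parC {A : Type} (B : Set A) : PCSP A → PCSP A → PCSP A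
  | .st s, Q => parCS B s Q
  | .pch p P₁ P₂, Q => .pch p (parC B P₁ Q) (parC B P₂ Q)

/-- `s ◻ Q` for a state `s`, distributing over probabilistic choice. -/
def echCS {A : Type} (s : SCSP A) : PCSP A → PCSP A
  | .st t => .st (.ech s t)
  | .pch p Q₁ Q₂ => .pch p (echCS s Q₁) (echCS s Q₂)

/-- `P ◻ Q` on processes, distributing over probabilistic choice. -/
def echC {A : Type} : PCSP A → PCSP A → PCSP A
  | .st s, Q => echCS s Q
  | .pch p P₁ P₂, Q => .pch p (echC P₁ Q) (echC P₂ Q)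

/-- Finite (nonempty) indexed internal choice `⨅_{i} P i`. -/
def ichFin {A : Type} : (n : ℕ) → (Fin (n+1) → PCSP A) → PCSP A
  | 0, P => P 0
  | n+1, P => .st (.ich (P 0) (ichFin n (fun i => P i.succ)))

/-- Finite (nonempty) indexed probabilistic choice `⊕_{i} p i · P i`. -/
def pchFin {A : Type} : (n : ℕ) → (Fin (n+1) → ℝ) → (Fin (n+1) → PCSP A) → PCSP A
  | 0, _, P => P 0
  | n+1, p, P => .pch (p 0) (P 0)
      (pchFin n (fun i => p i.succ / (1 - p 0)) (fun i => P i.succ))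

/-- Finite (nonempty) indexed external choice of states `◻_{i} s i`. -/
def echFin {A : Type} : (n : ℕ) → (Fin (n+1) → SCSP A) → SCSP A
  | 0, s => s 0
  | n+1, s => .ech (s 0) (echFin n (fun i => s i.succ))

/-- External choice of a list of states (empty list gives `0`). -/
def echList {A : Type} : List (SCSP A) → SCSP A
  | [] => .nil
  | s :: l => .ech s (echList l)

/-! ### State-based scalar testing -/

/-- The alphabet `Act ∪ {ω}` for ordinary (scalar) tests. -/
abbrev TAct (A : Type) := Sum A Unit

/-- The success action ω. -/
def omA {A : Type} : TAct A := Sum.inr ()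

/-- Membership in the state-based results-gathering function `V` (with success action `w`). -/
inductive VMem {B : Type} (w : B) : SCSP B → ℝ → Prop where
  | succ {s : SCSP B} {Δ} : Step s (some w) Δ → VMem w s 1
  | step {s : SCSP B} {α : Option B} {Δ} (f : SCSP B → ℝ) :
      (∀ Θ, ¬ Step s (some w) Θ) → Step s α Δ →
      (∀ t ∈ dsupp Δ, VMem w t (f t)) → VMem w s (dexp Δ f)
  | stuck {s : SCSP B} : (∀ α Δ, ¬ Step s α Δ) → VMem w s 0

/-- `V(Δ)` : the set of outcomes of a distribution, via choice functions. -/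
def VD {B : Type} (w : B) (Δ : Wt (SCSP B)) : Set ℝ :=
  {r | ∃ f : SCSP B → ℝ, (∀ t ∈ dsupp Δ, VMem w t (f t)) ∧ r = dexp Δ f}

/-- The application `T ∥_Act P` of a test to a process. -/
def applyTest {A : Type} (T : PCSP (TAct A)) (P : PCSP A) : PCSP (TAct A) :=
  parC (Set.range Sum.inl) T (mapP Sum.inl P)

/-- `A(T,P)` : state-based testing outcomes. -/
def Aset {A : Type} (T : PCSP (TAct A)) (P : PCSP A) : Set ℝ :=
  VD omA (applyTest T P).interp

/-- The Hoare preorder on sets of reals. -/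
def HoareLE (X Y : Set ℝ) : Prop := ∀ x ∈ X, ∃ y ∈ Y, x ≤ y

/-- The Smyth preorder on sets of reals. -/
def SmythLE (X Y : Set ℝ) : Prop := ∀ y ∈ Y, ∃ x ∈ X, x ≤ y

/-- The may-testing preorder `⊑_pmay`. -/
def PMay {A : Type} (P Q : PCSP A) : Prop :=
  ∀ T : PCSP (TAct A), PWF T → HoareLE (Aset T P) (Aset T Q)

/-- The must-testing preorder `⊑_pmust`. -/
def PMust {A : Type} (P Q : PCSP A) : Prop :=
  ∀ T : PCSP (TAct A), PWF T → SmythLE (Aset T P) (Aset T Q)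

/-! ### Action-based scalar testing -/

/-- Membership in the action-based results-gathering function `V̄`. -/
inductive VBarMem {B : Type} (w : B) : SCSP B → ℝ → Prop where
  | succ {s : SCSP B} {Δ} : Step s (some w) Δ → VBarMem w s 1
  | step {s : SCSP B} {α : Option B} {Δ} (f : SCSP B → ℝ) :
      α ≠ some w → Step s α Δ →
      (∀ t ∈ dsupp Δ, VBarMem w t (f t)) → VBarMem w s (dexp Δ f)
  | stuck {s : SCSP B} : (∀ α Δ, ¬ Step s α Δ) → VBarMem w s 0

/-- `V̄(Δ)`. -/
def VBarD {B : Type} (w : B) (Δ : Wt (SCSP B)) : Set ℝ :=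
  {r | ∃ f : SCSP B → ℝ, (∀ t ∈ dsupp Δ, VBarMem w t (f t)) ∧ r = dexp Δ f}

/-- `Ā(T,P)` : action-based testing outcomes. -/
def AsetBar {A : Type} (T : PCSP (TAct A)) (P : PCSP A) : Set ℝ :=
  VBarD omA (applyTest T P).interp

/-- The action-based may-testing preorder `⊑̄_pmay`. -/
def PMayBar {A : Type} (P Q : PCSP A) : Prop :=
  ∀ T : PCSP (TAct A), PWF T → HoareLE (AsetBar T P) (AsetBar T Q)

/-- The action-based must-testing preorder `⊑̄_pmust`. -/
def PMustBar {A : Type} (P Q : PCSP A) : Prop :=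
  ∀ T : PCSP (TAct A), PWF T → SmythLE (AsetBar T P) (AsetBar T Q)
/-! ### ω-avoiding transitions and the relation ⊲ᵉ_FS -/

/-- `s --α-->_ω Δ` : a transition from a state not enabling the success action `w`. -/
def StepOmega {B : Type} (w : B) (s : SCSP B) (α : Option B) (Δ : Wt (SCSP B)) : Prop :=
  (∀ Θ, ¬ Step s (some w) Θ) ∧ Step s α Δ

/-- `s --τ̂-->_ω Δ`. -/
def stepTauHatOm {B : Type} (w : B) (s : SCSP B) (Δ : Wt (SCSP B)) : Prop :=
  StepOmega w s none Δ ∨ Δ = dirac s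

/-- `==τ̂==>_ω`. -/
def TauStarOm {B : Type} (w : B) : Wt (SCSP B) → Wt (SCSP B) → Prop :=
  Relation.ReflTransGen (Lift (stepTauHatOm w))

/-- `==â==>_ω` for a visible action `a`. -/
def WeakAOm {B : Type} (w : B) (a : B) (Δ Θ : Wt (SCSP B)) : Prop :=
  ∃ Δ₁ Δ₂, TauStarOm w Δ Δ₁ ∧
    Lift (fun s Φ => StepOmega w s (some a) Φ) Δ₁ Δ₂ ∧ TauStarOm w Δ₂ Θ

/-- `==α̂==>_ω`. -/
def WeakOm {B : Type} (w : B) : Option B → Wt (SCSP B) → Wt (SCSP B) → Prop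
  | none => TauStarOm w
  | some a => WeakAOm w a

/-- A postfixed point for the coinductive definition of `⊲ᵉ_FS`. -/
def IsEFailSim {B : Type} (w : B) (R : SCSP B → Wt (SCSP B) → Prop) : Prop :=
  (∀ s Θ α Δ, R s Θ → StepOmega w s α Δ → ∃ Θ', WeakOm w α Θ Θ' ∧ Lift R Δ Θ') ∧
  (∀ s Θ (X : Set B), R s Θ → w ∈ X → SRefuses s X →
    ∃ Θ', TauStarOm w Θ Θ' ∧ DRefuses Θ' X)

/-- `s ⊲ᵉ_FS Θ` : the largest relation satisfying the transfer properties. -/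
def efsimLE {B : Type} (w : B) (s : SCSP B) (Θ : Wt (SCSP B)) : Prop :=
  ∃ R, IsEFailSim w R ∧ R s Θ

/-! ### Vector-based testing with success actions from Ω -/

/-- `α!o` : update the `α`-component of the outcome tuple to 1 if `α` is a success action. -/
def bang {A Om : Type} (α : Option (Sum A Om)) (o : Om → ℝ) : Om → ℝ :=
  fun w => if α = some (Sum.inr w) then 1 else o w

mutual
/-- Membership in the vector-based convex-closed results-gathering function `V̄↕^Ω`
for states.  -/
inductive WMem : {A Om : Type} → SCSP (Sum A Om) → (Om → ℝ) → Prop where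
  | stuck {A Om : Type} {s : SCSP (Sum A Om)} :
      (∀ α Δ, ¬ Step s α Δ) → WMem s (fun _ => 0)
  | step {A Om : Type} {s : SCSP (Sum A Om)} {n : ℕ}
      (p : Fin (n+1) → ℝ) (α : Fin (n+1) → Option (Sum A Om))
      (Δ : Fin (n+1) → Wt (SCSP (Sum A Om))) (o : Fin (n+1) → Om → ℝ) :
      (∀ i, 0 ≤ p i) → (∑ i, p i = 1) →
      (∀ i, Step s (α i) (Δ i)) →
      (∀ i, WMemD (Δ i) (o i)) →
      WMem s (fun w => ∑ i, p i * bang (α i) (o i) w)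
/-- Membership in `V̄↕^Ω` for distributions. -/
inductive WMemD : {A Om : Type} → Wt (SCSP (Sum A Om)) → (Om → ℝ) → Prop where
  | mk {A Om : Type} {Δ : Wt (SCSP (Sum A Om))} (f : SCSP (Sum A Om) → Om → ℝ) :
      (∀ t ∈ dsupp Δ, WMem t (f t)) → WMemD Δ (fun w => ∑ᶠ t, Δ t * f t w)
end

/-- `V̄↕^Ω(Δ)` as a set of outcome tuples. -/
def WsetD {A Om : Type} (Δ : Wt (SCSP (Sum A Om))) : Set (Om → ℝ) :=
  {o | WMemD Δ o}

/-- The application `T ∥_Act P` of an Ω-test to a process. -/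
def applyTestO {A Om : Type} (T : PCSP (Sum A Om)) (P : PCSP A) : PCSP (Sum A Om) :=
  parC (Set.range Sum.inl) T (mapP Sum.inl P)

/-- `A↕^Ω(T,P)` : vector-based testing outcomes of a process. -/
def AO {A Om : Type} (T : PCSP (Sum A Om)) (P : PCSP A) : Set (Om → ℝ) :=
  WsetD (applyTestO T P).interp

/-- `A↕^Ω(T,Δ)` for a distribution `Δ ∈ D(sCSP)`, via expected values. -/
def AOD {A Om : Type} (T : PCSP (Sum A Om)) (Δ : Wt (SCSP A)) : Set (Om → ℝ) :=
  {o | ∃ g : SCSP A → Om → ℝ,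
    (∀ s ∈ dsupp Δ, g s ∈ AO T (.st s)) ∧ o = fun w => ∑ᶠ s, Δ s * g s w}

/-- Hoare preorder on sets of outcome tuples (componentwise order). -/
def HoareLEV {Om : Type} (X Y : Set (Om → ℝ)) : Prop := ∀ x ∈ X, ∃ y ∈ Y, x ≤ y

/-- Smyth preorder on sets of outcome tuples (componentwise order). -/
def SmythLEV {Om : Type} (X Y : Set (Om → ℝ)) : Prop := ∀ y ∈ Y, ∃ x ∈ X, x ≤ y

/-- The vector-based may-testing preorder `⊑̄^Ω_pmay`. -/
def PMayO {A : Type} (Om : Type) (P Q : PCSP A) : Prop :=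
  ∀ T : PCSP (Sum A Om), PWF T → HoareLEV (AO T P) (AO T Q)

/-- The vector-based must-testing preorder `⊑̄^Ω_pmust`. -/
def PMustO {A : Type} (Om : Type) (P Q : PCSP A) : Prop :=
  ∀ T : PCSP (Sum A Om), PWF T → SmythLEV (AO T P) (AO T Q)

/-- The unit outcome vector `ω⃗`. -/
def unitVec {Om : Type} (w : Om) : Om → ℝ := fun w' => if w' = w then 1 else 0

/-! Occurrence of an action in a process term. -/
mutual
/-- Occurrence of an action in a process term. -/
inductive PUses : {B : Type} → B → PCSP B → Prop where
  | st {B : Type} {b : B} {s} : SUses b s → PUses b (.st s)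
  | pchL {B : Type} {b : B} {p P Q} : PUses b P → PUses b (.pch p P Q)
  | pchR {B : Type} {b : B} {p P Q} : PUses b Q → PUses b (.pch p P Q)
inductive SUses : {B : Type} → B → SCSP B → Prop where
  | preAct {B : Type} {b : B} {P} : SUses b (.pre b P)
  | pre {B : Type} {b : B} {a P} : PUses b P → SUses b (.pre a P)
  | ichL {B : Type} {b : B} {P Q} : PUses b P → SUses b (.ich P Q)
  | ichR {B : Type} {b : B} {P Q} : PUses b Q → SUses b (.ich P Q)
  | echL {B : Type} {b : B} {s t} : SUses b s → SUses b (.ech s t)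
  | echR {B : Type} {b : B} {s t} : SUses b t → SUses b (.ech s t)
  | parSet {B : Type} {b : B} {X s t} : b ∈ X → SUses b (.par X s t)
  | parL {B : Type} {b : B} {X s t} : SUses b s → SUses b (.par X s t)
  | parR {B : Type} {b : B} {X s t} : SUses b t → SUses b (.par X s t)
end
/-! ### The modal logic F -/

/-- Modal formulae of the logic `F`. -/
inductive Form (A : Type) : Type where
  | ref : Set A → Form A
  | dia : A → Form A → Form A
  | conj : (n : ℕ) → (Fin n → Form A) → Form A
  | prob : (n : ℕ) → (Fin n → ℝ) → (Fin n → Form A) → Form A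

/-- Well-formed formulae: probabilistic choices carry genuine distributions. -/
inductive WFF {A : Type} : Form A → Prop where
  | ref {X} : WFF (.ref X)
  | dia {a φ} : WFF φ → WFF (.dia a φ)
  | conj {n φs} : (∀ i, WFF (φs i)) → WFF (.conj n φs)
  | prob {n p φs} : (∀ i, 0 ≤ p i) → (∑ i, p i = 1) →
      (∀ i, WFF (φs i)) → WFF (.prob n p φs)

/-- Formulae of the sublogic `L`: no refusal construct. -/
inductive NoRef {A : Type} : Form A → Prop where
  | dia {a φ} : NoRef φ → NoRef (.dia a φ)
  | conj {n φs} : (∀ i, NoRef (φs i)) → NoRef (.conj n φs)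
  | prob {n p φs} : (∀ i, NoRef (φs i)) → NoRef (.prob n p φs)

/-- The satisfaction relation `Δ ⊨ φ`. -/
inductive Sat {A : Type} : Form A → Wt (SCSP A) → Prop where
  | ref {X : Set A} {Δ Δ'} : TauStar Δ Δ' → DRefuses Δ' X → Sat (.ref X) Δ
  | dia {a φ Δ Δ'} : WeakA a Δ Δ' → Sat φ Δ' → Sat (.dia a φ) Δ
  | conj {n φs Δ} : (∀ i, Sat (φs i) Δ) → Sat (.conj n φs) Δ
  | prob {n} {p : Fin n → ℝ} {φs Δ} (Δs : Fin n → Wt (SCSP A)) :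
      (∀ i, Sat (φs i) (Δs i)) →
      TauStar Δ (fun t => ∑ i, p i * Δs i t) →
      Sat (.prob n p φs) Δ

/-- The logical preorder `⊑^L`. -/
def LPre {A : Type} (P Q : PCSP A) : Prop :=
  ∀ φ : Form A, WFF φ → NoRef φ → Sat φ P.interp → Sat φ Q.interp

/-- The logical preorder `⊑^F`. -/
def FPre {A : Type} (P Q : PCSP A) : Prop :=
  ∀ φ : Form A, WFF φ → Sat φ Q.interp → Sat φ P.interp

mutual
/-- `CharS s φ` : `φ` is an F-characteristic formula `φ_s` of the state `s`. -/
inductive CharS : {A : Type} → SCSP A → Form A → Prop where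
  | noTau {A : Type} {s : SCSP A} (n : ℕ) (a : Fin n → A)
      (Δ : Fin n → Wt (SCSP A)) (φ : Fin n → Form A) :
      (∀ Θ, ¬ Step s none Θ) →
      (∀ i, Step s (some (a i)) (Δ i)) →
      (∀ b Θ, Step s (some b) Θ → ∃ i, a i = b ∧ Δ i = Θ) →
      (∀ i, CharD (Δ i) (φ i)) →
      CharS s (.conj (n+1) (Fin.snoc (fun i => .dia (a i) (φ i))
        (.ref {b : A | ∀ Θ, ¬ Step s (some b) Θ})))
  | tau {A : Type} {s : SCSP A} (n m : ℕ) (a : Fin n → A)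
      (Δ : Fin n → Wt (SCSP A)) (φ : Fin n → Form A)
      (Θs : Fin m → Wt (SCSP A)) (ψ : Fin m → Form A) :
      (∃ Θ, Step s none Θ) →
      (∀ i, Step s (some (a i)) (Δ i)) →
      (∀ b Θ, Step s (some b) Θ → ∃ i, a i = b ∧ Δ i = Θ) →
      (∀ j, Step s none (Θs j)) →
      (∀ Θ, Step s none Θ → ∃ j, Θs j = Θ) →
      (∀ i, CharD (Δ i) (φ i)) →
      (∀ j, CharD (Θs j) (ψ j)) →
      CharS s (.conj (n+m) (Fin.append (fun i => .dia (a i) (φ i)) ψ))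
/-- `CharD Δ φ` : `φ` is an F-characteristic formula `φ_Δ` of the distribution `Δ`. -/
inductive CharD : {A : Type} → Wt (SCSP A) → Form A → Prop where
  | mk {A : Type} {Δ : Wt (SCSP A)} (n : ℕ) (s : Fin n → SCSP A) (φ : Fin n → Form A) :
      Function.Injective s →
      (∀ i, s i ∈ dsupp Δ) →
      (∀ t ∈ dsupp Δ, ∃ i, s i = t) →
      (∀ i, CharS (s i) (φ i)) →
      CharD Δ (.prob n (fun i => Δ (s i)) φ)
end

mutual
/-- `CharSL s ψ` : `ψ` is an L-characteristic formula `ψ_s` of the state `s`. -/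
inductive CharSL : {A : Type} → SCSP A → Form A → Prop where
  | noTau {A : Type} {s : SCSP A} (n : ℕ) (a : Fin n → A)
      (Δ : Fin n → Wt (SCSP A)) (φ : Fin n → Form A) :
      (∀ Θ, ¬ Step s none Θ) →
      (∀ i, Step s (some (a i)) (Δ i)) →
      (∀ b Θ, Step s (some b) Θ → ∃ i, a i = b ∧ Δ i = Θ) →
      (∀ i, CharDL (Δ i) (φ i)) →
      CharSL s (.conj n (fun i => .dia (a i) (φ i)))
  | tau {A : Type} {s : SCSP A} (n m : ℕ) (a : Fin n → A)
      (Δ : Fin n → Wt (SCSP A)) (φ : Fin n → Form A)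
      (Θs : Fin m → Wt (SCSP A)) (ψ : Fin m → Form A) :
      (∃ Θ, Step s none Θ) →
      (∀ i, Step s (some (a i)) (Δ i)) →
      (∀ b Θ, Step s (some b) Θ → ∃ i, a i = b ∧ Δ i = Θ) →
      (∀ j, Step s none (Θs j)) →
      (∀ Θ, Step s none Θ → ∃ j, Θs j = Θ) →
      (∀ i, CharDL (Δ i) (φ i)) →
      (∀ j, CharDL (Θs j) (ψ j)) →
      CharSL s (.conj (n+m) (Fin.append (fun i => .dia (a i) (φ i)) ψ))
/-- `CharDL Δ ψ` : `ψ` is an L-characteristic formula `ψ_Δ` of the distribution `Δ`. -/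
inductive CharDL : {A : Type} → Wt (SCSP A) → Form A → Prop where
  | mk {A : Type} {Δ : Wt (SCSP A)} (n : ℕ) (s : Fin n → SCSP A) (φ : Fin n → Form A) :
      Function.Injective s →
      (∀ i, s i ∈ dsupp Δ) →
      (∀ t ∈ dsupp Δ, ∃ i, s i = t) →
      (∀ i, CharSL (s i) (φ i)) →
      CharDL Δ (.prob n (fun i => Δ (s i)) φ)
end
/-! ### The sub-language nCSP and (in)equational theories -/

mutual
/-- Membership in `nCSP`: no parallel composition. -/
inductive PNoPar : {A : Type} → PCSP A → Prop where
  | st {A : Type} {s : SCSP A} : SNoPar s → PNoPar (.st s)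
  | pch {A : Type} {p : ℝ} {P Q : PCSP A} : PNoPar P → PNoPar Q → PNoPar (.pch p P Q)
inductive SNoPar : {A : Type} → SCSP A → Prop where
  | nil {A : Type} : SNoPar (SCSP.nil (A := A))
  | pre {A : Type} {a : A} {P} : PNoPar P → SNoPar (.pre a P)
  | ich {A : Type} {P Q : PCSP A} : PNoPar P → PNoPar Q → SNoPar (.ich P Q)
  | ech {A : Type} {s t : SCSP A} : SNoPar s → SNoPar t → SNoPar (.ech s t)
end

/-- Initial actions of a state-based term (`none` denotes τ). -/
def initsS {A : Type} : SCSP A → Set (Option A)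
  | .nil => ∅
  | .pre a _ => {some a}
  | .ich _ _ => {none}
  | .ech s t => initsS s ∪ initsS t
  | .par _ s t => initsS s ∪ initsS t

/-- Initial actions of a process term. -/
def initsP {A : Type} : PCSP A → Set (Option A)
  | .st s => initsS s
  | .pch _ P Q => initsP P ∪ initsP Q

/-- Derivability in the equational theory `=_E` of Figure 3. -/
inductive EqE {A : Type} : PCSP A → PCSP A → Prop where
  | refl (P) : EqE P P
  | symm {P Q} : EqE P Q → EqE Q P
  | trans {P Q R} : EqE P Q → EqE Q R → EqE P R
  | congPre (a : A) {P Q} : EqE P Q → EqE (.st (.pre a P)) (.st (.pre a Q))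
  | congIch {P₁ P₂ Q₁ Q₂} : EqE P₁ Q₁ → EqE P₂ Q₂ →
      EqE (.st (.ich P₁ P₂)) (.st (.ich Q₁ Q₂))
  | congEch {P₁ P₂ Q₁ Q₂} : EqE P₁ Q₁ → EqE P₂ Q₂ →
      EqE (echC P₁ P₂) (echC Q₁ Q₂)
  | congPch (p : ℝ) {P₁ P₂ Q₁ Q₂} : EqE P₁ Q₁ → EqE P₂ Q₂ →
      EqE (.pch p P₁ P₂) (.pch p Q₁ Q₂)
  | P1 (p : ℝ) (h₀ : 0 < p) (h₁ : p < 1) (P) : EqE (.pch p P P) P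
  | P2 (p : ℝ) (h₀ : 0 < p) (h₁ : p < 1) (P Q) :
      EqE (.pch p P Q) (.pch (1-p) Q P)
  | P3 (p q : ℝ) (hp₀ : 0 < p) (hp₁ : p < 1) (hq₀ : 0 < q) (hq₁ : q < 1) (P Q R) :
      EqE (.pch q (.pch p P Q) R)
          (.pch (p*q) P (.pch ((1-p)*q/(1-p*q)) Q R))
  | I1 (P) : EqE (.st (.ich P P)) P
  | I2 (P Q) : EqE (.st (.ich P Q)) (.st (.ich Q P))
  | I3 (P Q R) : EqE (.st (.ich (.st (.ich P Q)) R)) (.st (.ich P (.st (.ich Q R))))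
  | E1 (P) : EqE (echC P (.st .nil)) P
  | E2 (P Q) : EqE (echC P Q) (echC Q P)
  | E3 (P Q R) : EqE (echC (echC P Q) R) (echC P (echC Q R))
  | EI (a : A) (P Q) :
      EqE (echC (.st (.pre a P)) (.st (.pre a Q)))
          (.st (.ich (.st (.pre a P)) (.st (.pre a Q))))
  | D1 (p : ℝ) (h₀ : 0 < p) (h₁ : p < 1) (P Q R) :
      EqE (echC P (.pch p Q R)) (.pch p (echC P Q) (echC P R))
  | D2 (a : A) (P Q R) :
      EqE (echC (.st (.pre a P)) (.st (.ich Q R)))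
          (.st (.ich (echC (.st (.pre a P)) Q) (echC (.st (.pre a P)) R)))
  | D3 (P₁ P₂ Q₁ Q₂) :
      EqE (echC (.st (.ich P₁ P₂)) (.st (.ich Q₁ Q₂)))
          (.st (.ich
            (.st (.ich (echC P₁ (.st (.ich Q₁ Q₂))) (echC P₂ (.st (.ich Q₁ Q₂)))))
            (.st (.ich (echC (.st (.ich P₁ P₂)) Q₁) (echC (.st (.ich P₁ P₂)) Q₂)))))

/-- Derivability from the probabilistic axioms P1–P3 and D1 only (`=_prob`). -/
inductive EqProb {A : Type} : PCSP A → PCSP A → Prop where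
  | refl (P) : EqProb P P
  | symm {P Q} : EqProb P Q → EqProb Q P
  | trans {P Q R} : EqProb P Q → EqProb Q R → EqProb P R
  | congPre (a : A) {P Q} : EqProb P Q → EqProb (.st (.pre a P)) (.st (.pre a Q))
  | congIch {P₁ P₂ Q₁ Q₂} : EqProb P₁ Q₁ → EqProb P₂ Q₂ →
      EqProb (.st (.ich P₁ P₂)) (.st (.ich Q₁ Q₂))
  | congEch {P₁ P₂ Q₁ Q₂} : EqProb P₁ Q₁ → EqProb P₂ Q₂ →
      EqProb (echC P₁ P₂) (echC Q₁ Q₂)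
  | congPch (p : ℝ) {P₁ P₂ Q₁ Q₂} : EqProb P₁ Q₁ → EqProb P₂ Q₂ →
      EqProb (.pch p P₁ P₂) (.pch p Q₁ Q₂)
  | P1 (p : ℝ) (h₀ : 0 < p) (h₁ : p < 1) (P) : EqProb (.pch p P P) P
  | P2 (p : ℝ) (h₀ : 0 < p) (h₁ : p < 1) (P Q) :
      EqProb (.pch p P Q) (.pch (1-p) Q P)
  | P3 (p q : ℝ) (hp₀ : 0 < p) (hp₁ : p < 1) (hq₀ : 0 < q) (hq₁ : q < 1) (P Q R) :
      EqProb (.pch q (.pch p P Q) R)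
          (.pch (p*q) P (.pch ((1-p)*q/(1-p*q)) Q R))
  | D1 (p : ℝ) (h₀ : 0 < p) (h₁ : p < 1) (P Q R) :
      EqProb (echC P (.pch p Q R)) (.pch p (echC P Q) (echC P R))

mutual
/-- Normal forms. -/
inductive IsNF : {A : Type} → PCSP A → Prop where
  | pch {A : Type} {p : ℝ} {N₁ N₂ : PCSP A} : 0 < p → p < 1 →
      IsNF N₁ → IsNF N₂ → IsNF (.pch p N₁ N₂)
  | ich {A : Type} {N₁ N₂ : PCSP A} : IsNF N₁ → IsNF N₂ → IsNF (.st (.ich N₁ N₂))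
  | ext {A : Type} {s : SCSP A} : IsExtNF s → IsNF (.st s)
/-- External-choice normal forms `◻_{i∈I} a_i.N_i`. -/
inductive IsExtNF : {A : Type} → SCSP A → Prop where
  | nil {A : Type} : IsExtNF (SCSP.nil (A := A))
  | pre {A : Type} {a : A} {N} : IsNF N → IsExtNF (.pre a N)
  | ech {A : Type} {s t : SCSP A} : IsExtNF s → IsExtNF t → IsExtNF (.ech s t)
end

/-- Derivability in the inequational theory for may testing (`⊑_Emay`). -/
inductive LeMay {A : Type} : PCSP A → PCSP A → Prop where
  | ofEq {P Q} : EqE P Q → LeMay P Q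
  | trans {P Q R} : LeMay P Q → LeMay Q R → LeMay P R
  | congPre (a : A) {P Q} : LeMay P Q → LeMay (.st (.pre a P)) (.st (.pre a Q))
  | congIch {P₁ P₂ Q₁ Q₂} : LeMay P₁ Q₁ → LeMay P₂ Q₂ →
      LeMay (.st (.ich P₁ P₂)) (.st (.ich Q₁ Q₂))
  | congEch {P₁ P₂ Q₁ Q₂} : LeMay P₁ Q₁ → LeMay P₂ Q₂ →
      LeMay (echC P₁ P₂) (echC Q₁ Q₂)
  | congPch (p : ℝ) {P₁ P₂ Q₁ Q₂} : LeMay P₁ Q₁ → LeMay P₂ Q₂ →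
      LeMay (.pch p P₁ P₂) (.pch p Q₁ Q₂)
  | may0 (a b : A) (P Q) :
      LeMay (echC (.st (.pre a P)) (.st (.pre b Q)))
            (.st (.ich (.st (.pre a P)) (.st (.pre b Q))))
  | may0' (a b : A) (P Q) :
      LeMay (.st (.ich (.st (.pre a P)) (.st (.pre b Q))))
            (echC (.st (.pre a P)) (.st (.pre b Q)))
  | may1 (P Q) : LeMay P (.st (.ich P Q))
  | may2 (P) : LeMay (.st .nil) P
  | may3 (a : A) (p : ℝ) (h₀ : 0 < p) (h₁ : p < 1) (P Q) :
      LeMay (.st (.pre a (.pch p P Q))) (.pch p (.st (.pre a P)) (.st (.pre a Q)))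

/-- Derivability in the inequational theory for must testing (`⊑_Emust`). -/
inductive LeMust {A : Type} : PCSP A → PCSP A → Prop where
  | ofEq {P Q} : EqE P Q → LeMust P Q
  | trans {P Q R} : LeMust P Q → LeMust Q R → LeMust P R
  | congPre (a : A) {P Q} : LeMust P Q → LeMust (.st (.pre a P)) (.st (.pre a Q))
  | congIch {P₁ P₂ Q₁ Q₂} : LeMust P₁ Q₁ → LeMust P₂ Q₂ →
      LeMust (.st (.ich P₁ P₂)) (.st (.ich Q₁ Q₂))
  | congEch {P₁ P₂ Q₁ Q₂} : LeMust P₁ Q₁ → LeMust P₂ Q₂ →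
      LeMust (echC P₁ P₂) (echC Q₁ Q₂)
  | congPch (p : ℝ) {P₁ P₂ Q₁ Q₂} : LeMust P₁ Q₁ → LeMust P₂ Q₂ →
      LeMust (.pch p P₁ P₂) (.pch p Q₁ Q₂)
  | must1 (P Q) : LeMust (.st (.ich P Q)) Q
  | must2 (n : ℕ) (a : Fin (n+1) → A) (m : Fin (n+1) → ℕ)
      (p : (i : Fin (n+1)) → Fin (m i + 1) → ℝ)
      (Q : (i : Fin (n+1)) → Fin (m i + 1) → PCSP A)
      (P : (i : Fin (n+1)) → Fin (m i + 1) → PCSP A)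
      (R : PCSP A) :
      (∀ i j, 0 ≤ p i j) → (∀ i, ∑ j, p i j = 1) →
      initsP R ⊆ {α | ∃ i, α = some (a i)} →
      LeMust
        (.st (.ich R (ichFin n (fun i =>
          pchFin (m i) (p i) (fun j => echC (.st (.pre (a i) (Q i j))) (P i j))))))
        (.st (echFin n (fun i => .pre (a i) (pchFin (m i) (p i) (Q i)))))


/-!
A single transition of an nCSP state is reflected by the axioms: a prefix `a.P` is below itself,
an internal choice is resolved by (Must1) and (May1), and external choice is handled by
congruence, (E1), (E2) and (May2). A lifted transition `⟦P⟧ = Σᵢ pᵢ·δ(sᵢ) --α--> Σᵢ pᵢ·Φᵢ` is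
reassembled from these: `P` is provably the convex combination of the states `sᵢ`, each `sᵢ` is
replaced by a term for `Φᵢ` using congruence for `⊕` (and (May3) to push a prefix inside), and
weak transitions follow by transitivity.

This rests on the completeness of P1–P3 for the interpretation: well-formed terms with the same
distribution are provably equal. By induction on the size of the support, it suffices that every
`P` splits provably as `s ⊕_w P'` with `w = ⟦P⟧(s)`; the split of `P₁ ⊕_p P₂` is obtained from
those of `P₁` and `P₂` by the medial law, which follows from P1–P3.
-/

section Interpretation

variable {A : Type}

@[simp] lemma dirac_self {X : Type} (x : X) : dirac x x = 1 := if_pos rfl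

lemma dirac_of_ne {X : Type} {x y : X} (h : y ≠ x) : dirac x y = 0 := if_neg h

lemma dirac_nonneg {X : Type} (x y : X) : 0 ≤ dirac x y := by
  unfold dirac; split_ifs <;> norm_num

lemma dirac_le_one {X : Type} (x y : X) : dirac x y ≤ 1 := by
  unfold dirac; split_ifs <;> norm_num

lemma dmap_dirac {X Y : Type} (g : X → Y) (x : X) : dmap g (dirac x) = dirac (g x) := by
  funext y
  rw [dmap, finsum_mem_def, finsum_eq_single _ x fun x' hx' => by simp [dirac, hx']]
  by_cases hy : y = g x <;> simp [dirac, Set.indicator, hy, eq_comm]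

lemma dmap_mul_add_mul {X Y : Type} (g : X → Y) {Δ₁ Δ₂ : Wt X} (h₁ : (dsupp Δ₁).Finite)
    (h₂ : (dsupp Δ₂).Finite) (p q : ℝ) :
    dmap g (fun x => p * Δ₁ x + q * Δ₂ x) = fun y => p * dmap g Δ₁ y + q * dmap g Δ₂ y := by
  funext y
  rw [dmap, finsum_mem_add_distrib', ← mul_finsum_mem, ← mul_finsum_mem]; rfl
  · exact h₁.subset (Set.inter_subset_right.trans (Function.support_mul_subset_right _ _))
  · exact h₂.subset (Set.inter_subset_right.trans (Function.support_mul_subset_right _ _))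

namespace PCSP

@[simp] lemma interp_st (s : SCSP A) : (PCSP.st s).interp = dirac s := rfl

@[simp] lemma interp_pch (p : ℝ) (P Q : PCSP A) :
    (PCSP.pch p P Q).interp = fun t => p * P.interp t + (1 - p) * Q.interp t := rfl

lemma finite_dsupp_interp : ∀ P : PCSP A, (dsupp P.interp).Finite
  | .st s => (Set.finite_singleton s).subset fun t ht => by
      by_contra hts
      exact ht (dirac_of_ne hts)
  | .pch p P Q => ((finite_dsupp_interp P).union (finite_dsupp_interp Q)).subset fun t ht => by
      by_contra hPQ
      simp only [Set.mem_union, dsupp, Function.mem_support, not_or, not_not] at hPQ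
      simp [dsupp, hPQ] at ht

end PCSP

namespace PWF

lemma interp_nonneg : ∀ {P : PCSP A}, PWF P → ∀ t, 0 ≤ P.interp t
  | .st s, _, t => dirac_nonneg s t
  | .pch p P Q, .pch hp₀ hp₁ hP hQ, t => by
      have := hP.interp_nonneg t
      have := hQ.interp_nonneg t
      simp only [PCSP.interp_pch]
      nlinarith

lemma interp_le_one : ∀ {P : PCSP A}, PWF P → ∀ t, P.interp t ≤ 1
  | .st s, _, t => dirac_le_one s t
  | .pch p P Q, .pch hp₀ hp₁ hP hQ, t => by
      have := hP.interp_le_one t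
      have := hQ.interp_le_one t
      simp only [PCSP.interp_pch]
      nlinarith

lemma exists_interp_pos : ∀ {P : PCSP A}, PWF P → ∃ s, 0 < P.interp s
  | .st s, _ => ⟨s, by simp⟩
  | .pch p P Q, .pch hp₀ hp₁ hP hQ => by
      obtain ⟨s, hs⟩ := hP.exists_interp_pos
      have := hQ.interp_nonneg s
      exact ⟨s, by simp only [PCSP.interp_pch]; nlinarith⟩

lemma swf_of_mem_dsupp : ∀ {P : PCSP A}, PWF P → ∀ {s}, s ∈ dsupp P.interp → SWF s
  | .st t, .st ht, s, hs => by
      obtain rfl : s = t := by_contra fun hst => hs (dirac_of_ne hst)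
      exact ht
  | .pch p P Q, .pch _ _ hP hQ, s, hs => by
      by_cases hPs : P.interp s = 0
      · refine hQ.swf_of_mem_dsupp fun hQs => hs ?_
        simp [hPs, hQs]
      · exact hP.swf_of_mem_dsupp hPs

end PWF

lemma PNoPar.snoPar_of_mem_dsupp : ∀ {P : PCSP A}, PNoPar P → ∀ {s}, s ∈ dsupp P.interp →
    SNoPar s
  | .st t, .st ht, s, hs => by
      obtain rfl : s = t := by_contra fun hst => hs (dirac_of_ne hst)
      exact ht
  | .pch p P Q, .pch hP hQ, s, hs => by
      by_cases hPs : P.interp s = 0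
      · refine hQ.snoPar_of_mem_dsupp fun hQs => hs ?_
        simp [hPs, hQs]
      · exact hP.snoPar_of_mem_dsupp hPs

end Interpretation

section WeightedChoice

variable {A : Type}

/-- The choice between `P` and `Q` with nonnegative weights `a` and `b`, i.e. `P ⊕_{a/(a+b)} Q`,
except that a component of weight zero is dropped: unlike `⊕_p`, it is defined for all weights. -/
def wch (a b : ℝ) (P Q : PCSP A) : PCSP A :=
  if a = 0 then Q else if b = 0 then P else .pch (a / (a + b)) P Q

variable {a b c d : ℝ} {P Q R S : PCSP A}

@[simp] lemma wch_zero_left (b : ℝ) (P Q : PCSP A) : wch 0 b P Q = Q := if_pos rfl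

@[simp] lemma wch_zero_right (ha : a ≠ 0) (P Q : PCSP A) : wch a 0 P Q = P := by
  simp [wch, ha]

lemma wch_of_ne_zero (ha : a ≠ 0) (hb : b ≠ 0) (P Q : PCSP A) :
    wch a b P Q = .pch (a / (a + b)) P Q := by
  simp [wch, ha, hb]

lemma pch_eq_wch {p : ℝ} (hp₀ : 0 < p) (hp₁ : p < 1) (P Q : PCSP A) :
    PCSP.pch p P Q = wch p (1 - p) P Q := by
  rw [wch_of_ne_zero hp₀.ne' (by linarith)]
  simp

lemma wch_mul_mul {k : ℝ} (hk : k ≠ 0) (a b : ℝ) (P Q : PCSP A) :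
    wch (k * a) (k * b) P Q = wch a b P Q := by
  simp only [wch, mul_eq_zero, hk, false_or]
  split_ifs
  · rfl
  · rfl
  · rw [← mul_add, mul_div_mul_left _ _ hk]

lemma interp_wch (ha : 0 ≤ a) (hb : 0 ≤ b) (P Q : PCSP A) (t : SCSP A) :
    (a + b) * (wch a b P Q).interp t = a * P.interp t + b * Q.interp t := by
  rcases eq_or_ne a 0 with rfl | ha'
  · simp
  rcases eq_or_ne b 0 with rfl | hb'
  · simp [ha']
  rw [wch_of_ne_zero ha' hb', PCSP.interp_pch]
  have : a + b ≠ 0 := by positivity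
  field_simp
  ring

lemma div_add_mem_Ioo (ha : 0 < a) (hb : 0 < b) : a / (a + b) ∈ Set.Ioo 0 1 :=
  ⟨by positivity, (div_lt_one (by positivity)).2 (by linarith)⟩

lemma PWF.wch (ha : 0 ≤ a) (hb : 0 ≤ b) (hP : a ≠ 0 → PWF P) (hQ : PWF Q) :
    PWF (wch a b P Q) := by
  rcases eq_or_ne a 0 with rfl | ha'
  · simpa
  rcases eq_or_ne b 0 with rfl | hb'
  · simpa [ha'] using hP ha'
  have hw := div_add_mem_Ioo (ha.lt_of_ne' ha') (hb.lt_of_ne' hb')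
  rw [wch_of_ne_zero ha' hb']
  exact .pch hw.1 hw.2 (hP ha') hQ

lemma PNoPar.wch (hP : a ≠ 0 → PNoPar P) (hQ : PNoPar Q) : PNoPar (wch a b P Q) := by
  unfold PaperPCSP.wch
  split_ifs with ha
  exacts [hQ, hP ha, .pch (hP ha) hQ]

lemma wch_rel {Rel : PCSP A → PCSP A → Prop}
    (hcong : ∀ (p : ℝ) {P₁ P₂ Q₁ Q₂}, Rel P₁ Q₁ → Rel P₂ Q₂ → Rel (.pch p P₁ P₂) (.pch p Q₁ Q₂))
    {P' Q' : PCSP A} (hP : a ≠ 0 → Rel P P') (hQ : Rel Q Q') :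
    Rel (wch a b P Q) (wch a b P' Q') := by
  unfold wch
  split_ifs with ha
  exacts [hQ, hP ha, hcong _ (hP ha) hQ]

namespace EqE

lemma wch_congr {P' Q' : PCSP A} (hP : EqE P P') (hQ : EqE Q Q') :
    EqE (wch a b P Q) (wch a b P' Q') :=
  wch_rel congPch (fun _ => hP) hQ

lemma wch_self (ha : 0 ≤ a) (hb : 0 ≤ b) (P : PCSP A) : EqE (wch a b P P) P := by
  rcases eq_or_ne a 0 with rfl | ha'
  · simpa using refl P
  rcases eq_or_ne b 0 with rfl | hb'
  · simpa [ha'] using refl P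
  have hw := div_add_mem_Ioo (ha.lt_of_ne' ha') (hb.lt_of_ne' hb')
  rw [wch_of_ne_zero ha' hb']
  exact P1 _ hw.1 hw.2 P

lemma wch_comm (ha : 0 ≤ a) (hb : 0 ≤ b) (hab : a + b ≠ 0) (P Q : PCSP A) :
    EqE (wch a b P Q) (wch b a Q P) := by
  rcases eq_or_ne a 0 with rfl | ha'
  · simpa [show b ≠ 0 by simpa using hab] using refl Q
  rcases eq_or_ne b 0 with rfl | hb'
  · simpa [ha'] using refl P
  have hw := div_add_mem_Ioo (ha.lt_of_ne' ha') (hb.lt_of_ne' hb')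
  rw [wch_of_ne_zero ha' hb', wch_of_ne_zero hb' ha']
  convert P2 _ hw.1 hw.2 P Q using 2
  field_simp
  ring

lemma wch_assoc (ha : 0 ≤ a) (hb : 0 ≤ b) (hc : 0 ≤ c) (P Q R : PCSP A) :
    EqE (wch (a + b) c (wch a b P Q) R) (wch a (b + c) P (wch b c Q R)) := by
  rcases eq_or_ne a 0 with rfl | ha'
  · simpa using refl _
  rcases eq_or_ne b 0 with rfl | hb'
  · simpa [ha'] using refl _
  have ha₀ := ha.lt_of_ne' ha'
  have hb₀ := hb.lt_of_ne' hb'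
  rcases eq_or_ne c 0 with rfl | hc'
  · simpa [ha', hb', (add_pos ha₀ hb₀).ne'] using refl _
  have hc₀ := hc.lt_of_ne' hc'
  have hp := div_add_mem_Ioo ha₀ hb₀
  have hq := div_add_mem_Ioo (add_pos ha₀ hb₀) hc₀
  rw [wch_of_ne_zero ha' hb', wch_of_ne_zero (add_pos ha₀ hb₀).ne' hc',
    wch_of_ne_zero hb' hc', wch_of_ne_zero ha' (add_pos hb₀ hc₀).ne']
  convert P3 _ _ hp.1 hp.2 hq.1 hq.2 P Q R using 2
  · field_simp
    ring
  · have hab : a + b ≠ 0 := by positivity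
    have habc : a + b + c ≠ 0 := by positivity
    congr 1
    rw [one_sub_div hab, div_mul_div_cancel₀ hab, div_mul_div_cancel₀ hab, one_sub_div habc,
      div_div_div_cancel_right₀ habc]
    ring_nf

/-- The medial law `(aS + bP) + (cS + dQ) = (a + c)S + (bP + dQ)`, followed by idempotence. -/
lemma wch_wch_same (ha : 0 ≤ a) (hb : 0 ≤ b) (hc : 0 ≤ c) (hd : 0 ≤ d) (S P Q : PCSP A) :
    EqE (wch (a + b) (c + d) (wch a b S P) (wch c d S Q))
      (wch (a + c) (b + d) S (wch b d P Q)) := by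
  have hswap : EqE (wch (b + c) d (wch b c P S) Q) (wch (c + b) d (wch c b S P) Q) := by
    rcases eq_or_ne (b + c) 0 with hbc | hbc
    · obtain ⟨rfl, rfl⟩ : b = 0 ∧ c = 0 := ⟨by linarith, by linarith⟩
      simpa using refl Q
    rw [add_comm c b]
    exact wch_congr (wch_comm hb hc hbc P S) (refl Q)
  have hinner : EqE (wch b (c + d) P (wch c d S Q)) (wch c (b + d) S (wch b d P Q)) :=
    ((wch_assoc hb hc hd P S Q).symm.trans hswap).trans (wch_assoc hc hb hd S P Q)
  have hout : EqE (wch (a + b) (c + d) (wch a b S P) (wch c d S Q))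
      (wch a (c + (b + d)) S (wch c (b + d) S (wch b d P Q))) := by
    rw [show c + (b + d) = b + (c + d) by ring]
    exact (wch_assoc ha hb (by positivity) S P _).trans (wch_congr (refl S) hinner)
  exact (hout.trans (wch_assoc ha hc (by positivity) S S _).symm).trans
    (wch_congr (wch_self ha hc S) (refl _))

end EqE

end WeightedChoice

section Completeness

variable {A : Type}

lemma exists_eqE_wch_st (s : SCSP A) : ∀ {P : PCSP A}, PWF P →
    ∃ P', PWF P' ∧ EqE P (wch (P.interp s) (1 - P.interp s) (.st s) P') ∧
      ∀ t, P.interp t = P.interp s * dirac s t + (1 - P.interp s) * P'.interp t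
  | .st t, hP => by
      by_cases hts : t = s
      · subst hts
        exact ⟨.st t, hP, by simpa using EqE.refl _, fun u => by simp⟩
      · exact ⟨.st t, hP, by simpa [dirac_of_ne (Ne.symm hts)] using EqE.refl _,
          fun u => by simp [dirac_of_ne (Ne.symm hts)]⟩
  | .pch p P₁ P₂, .pch hp₀ hp₁ h₁ h₂ => by
      obtain ⟨P₁', h₁', e₁, i₁⟩ := exists_eqE_wch_st s h₁
      obtain ⟨P₂', h₂', e₂, i₂⟩ := exists_eqE_wch_st s h₂
      set w₁ := P₁.interp s
      set w₂ := P₂.interp s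
      have hw₁ : 0 ≤ w₁ ∧ w₁ ≤ 1 := ⟨h₁.interp_nonneg s, h₁.interp_le_one s⟩
      have hw₂ : 0 ≤ w₂ ∧ w₂ ≤ 1 := ⟨h₂.interp_nonneg s, h₂.interp_le_one s⟩
      have ha : 0 ≤ p * w₁ := by nlinarith
      have hb : 0 ≤ p * (1 - w₁) := by nlinarith
      have hc : 0 ≤ (1 - p) * w₂ := by nlinarith
      have hd : 0 ≤ (1 - p) * (1 - w₂) := by nlinarith
      refine ⟨wch (p * (1 - w₁)) ((1 - p) * (1 - w₂)) P₁' P₂', .wch hb hd (fun _ => h₁') h₂',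
        ?_, fun t => ?_⟩
      · have hsplit : PCSP.pch p (wch w₁ (1 - w₁) (.st s) P₁')
            (wch w₂ (1 - w₂) (.st s) P₂') =
            wch (p * w₁ + p * (1 - w₁))
              ((1 - p) * w₂ + (1 - p) * (1 - w₂))
              (wch (p * w₁) (p * (1 - w₁)) (.st s) P₁')
              (wch ((1 - p) * w₂) ((1 - p) * (1 - w₂)) (.st s) P₂') := by
          rw [pch_eq_wch hp₀ hp₁, wch_mul_mul hp₀.ne', wch_mul_mul (by linarith)]
          congr 1 <;> ring
        have hmerge := EqE.wch_wch_same ha hb hc hd (.st s) P₁' P₂'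
        rw [← hsplit] at hmerge
        convert (EqE.congPch p e₁ e₂).trans hmerge using 2 <;>
          · simp only [PCSP.interp_pch]
            ring
      · have hP' := interp_wch hb hd P₁' P₂' t
        simp only [PCSP.interp_pch]
        rw [i₁ t, i₂ t]
        linear_combination -hP'

theorem eqE_of_interp_eq {P Q : PCSP A} (hP : PWF P) (hQ : PWF Q) (h : P.interp = Q.interp) :
    EqE P Q := by
  induction hn : (dsupp P.interp).ncard using Nat.strong_induction_on generalizing P Q with
  | _ n ih =>
  obtain ⟨s, hs⟩ := hP.exists_interp_pos
  obtain ⟨P', hP', eP, iP⟩ := exists_eqE_wch_st s hP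
  obtain ⟨Q', hQ', eQ, iQ⟩ := exists_eqE_wch_st s hQ
  rw [← h] at eQ iQ
  rcases eq_or_ne (P.interp s) 1 with hw | hw
  · rw [hw, sub_self, wch_zero_right one_ne_zero] at eP eQ
    exact eP.trans eQ.symm
  have hw' : 1 - P.interp s ≠ 0 := sub_ne_zero.2 hw.symm
  have hP's : P'.interp s = 0 := by
    have := iP s
    simp only [dirac_self, mul_one, left_eq_add, mul_eq_zero, hw', false_or] at this
    exact this
  have hsub : dsupp P'.interp ⊆ dsupp P.interp := fun t ht => by
    by_cases hts : t = s
    · exact hts ▸ hs.ne'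
    · rw [dsupp, Function.mem_support, iP t, dirac_of_ne hts]
      simpa [dsupp, hw'] using ht
  have hlt : (dsupp P'.interp).ncard < n :=
    hn ▸ Set.ncard_lt_ncard ⟨hsub, fun h => h hs.ne' hP's⟩ (PCSP.finite_dsupp_interp P)
  have hint : P'.interp = Q'.interp := funext fun t =>
    mul_left_cancel₀ hw' (by linarith [iP t, iQ t])
  exact (eP.trans (EqE.wch_congr (.refl _) (ih _ hlt hP' hQ' hint rfl))).trans eQ.symm

end Completeness

section ConvexCombination

variable {A : Type}

def comb : (n : ℕ) → (Fin n → ℝ) → (Fin n → PCSP A) → PCSP A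
  | 0, _, _ => .st .nil
  | n + 1, p, P =>
      wch (p 0) (∑ i : Fin n, p i.succ) (P 0) (comb n (fun i => p i.succ) (fun i => P i.succ))

lemma interp_comb : ∀ {n : ℕ} {p : Fin n → ℝ} (P : Fin n → PCSP A), (∀ i, 0 ≤ p i) →
    ∀ t, (∑ i, p i) * (comb n p P).interp t = ∑ i, p i * (P i).interp t
  | 0, _, _, _, _ => by simp
  | n + 1, p, P, hp, t => by
      rw [Fin.sum_univ_succ, Fin.sum_univ_succ, comb,
        interp_wch (hp 0) (Finset.sum_nonneg fun (i : Fin n) _ => hp i.succ),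
        interp_comb (fun i => P i.succ) (fun i => hp i.succ)]

lemma PWF.comb : ∀ {n : ℕ} {p : Fin n → ℝ} {P : Fin n → PCSP A}, (∀ i, 0 ≤ p i) →
    (∀ i, p i ≠ 0 → PWF (P i)) → PWF (comb n p P)
  | 0, _, _, _, _ => .st .nil
  | n + 1, _, _, hp, hP =>
      .wch (hp 0) (Finset.sum_nonneg fun (i : Fin n) _ => hp i.succ) (hP 0)
        (PWF.comb (fun i => hp i.succ) (fun i => hP i.succ))

lemma PNoPar.comb : ∀ {n : ℕ} {p : Fin n → ℝ} {P : Fin n → PCSP A},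
    (∀ i, p i ≠ 0 → PNoPar (P i)) → PNoPar (comb n p P)
  | 0, _, _, _ => .st .nil
  | _ + 1, _, _, hP => .wch (hP 0) (PNoPar.comb fun i => hP i.succ)

lemma comb_rel {Rel : PCSP A → PCSP A → Prop} (hrefl : ∀ P, Rel P P)
    (hcong : ∀ (p : ℝ) {P₁ P₂ Q₁ Q₂}, Rel P₁ Q₁ → Rel P₂ Q₂ → Rel (.pch p P₁ P₂) (.pch p Q₁ Q₂)) :
    ∀ {n : ℕ} {p : Fin n → ℝ} {P Q : Fin n → PCSP A}, (∀ i, p i ≠ 0 → Rel (P i) (Q i)) →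
      Rel (comb n p P) (comb n p Q)
  | 0, _, _, _, _ => hrefl _
  | _ + 1, _, _, _, h => wch_rel hcong (h 0) (comb_rel hrefl hcong fun i => h i.succ)

lemma LeMay.pre_comb (a : A) : ∀ {n : ℕ} {p : Fin n → ℝ} (P : Fin n → PCSP A),
    (∀ i, 0 ≤ p i) → 0 < ∑ i, p i →
      LeMay (.st (.pre a (comb n p P))) (comb n p fun i => .st (.pre a (P i)))
  | 0, _, _, _, hsum => by simp at hsum
  | n + 1, p, P, hp, hsum => by
      have htail := pre_comb a (fun i => P i.succ) (fun i => hp i.succ)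
      have hS : 0 ≤ ∑ i : Fin n, p i.succ := Finset.sum_nonneg fun i _ => hp i.succ
      rw [Fin.sum_univ_succ] at hsum
      rw [comb, comb]
      rcases eq_or_ne (p 0) 0 with h₀ | h₀
      · simp only [h₀, wch_zero_left]
        exact htail (by linarith)
      rcases eq_or_ne (∑ i : Fin n, p i.succ) 0 with hS₀ | hS₀
      · simpa [h₀, hS₀] using ofEq (.refl _)
      have hw := div_add_mem_Ioo ((hp 0).lt_of_ne' h₀) (hS.lt_of_ne' hS₀)
      rw [wch_of_ne_zero h₀ hS₀, wch_of_ne_zero h₀ hS₀]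
      exact (may3 a _ hw.1 hw.2 _ _).trans
        (congPch _ (ofEq (.refl _)) (htail (hS.lt_of_ne' hS₀)))

end ConvexCombination

section Derivatives

variable {A : Type}

lemma PWF.echCS {s : SCSP A} (hs : SWF s) : ∀ {Q : PCSP A}, PWF Q → PWF (echCS s Q)
  | .st _, .st ht => .st (.ech hs ht)
  | .pch _ _ _, .pch hp₀ hp₁ hQ₁ hQ₂ => .pch hp₀ hp₁ (hQ₁.echCS hs) (hQ₂.echCS hs)

lemma PWF.echC : ∀ {P Q : PCSP A}, PWF P → PWF Q → PWF (echC P Q)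
  | .st _, _, .st hs, hQ => hQ.echCS hs
  | .pch _ _ _, _, .pch hp₀ hp₁ hP₁ hP₂, hQ => .pch hp₀ hp₁ (hP₁.echC hQ) (hP₂.echC hQ)

lemma PNoPar.echCS {s : SCSP A} (hs : SNoPar s) : ∀ {Q : PCSP A}, PNoPar Q → PNoPar (echCS s Q)
  | .st _, .st ht => .st (.ech hs ht)
  | .pch _ _ _, .pch hQ₁ hQ₂ => .pch (hQ₁.echCS hs) (hQ₂.echCS hs)

lemma PNoPar.echC : ∀ {P Q : PCSP A}, PNoPar P → PNoPar Q → PNoPar (echC P Q)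
  | .st _, _, .st hs, hQ => hQ.echCS hs
  | .pch _ _ _, _, .pch hP₁ hP₂, hQ => .pch (hP₁.echC hQ) (hP₂.echC hQ)

lemma interp_echCS (s : SCSP A) : ∀ Q : PCSP A,
    (echCS s Q).interp = dmap (fun t => .ech s t) Q.interp
  | .st t => (dmap_dirac _ t).symm
  | .pch p Q₁ Q₂ => by
      rw [echCS, PCSP.interp_pch, PCSP.interp_pch, interp_echCS s Q₁, interp_echCS s Q₂,
        dmap_mul_add_mul _ (Q₁.finite_dsupp_interp) (Q₂.finite_dsupp_interp)]

lemma interp_echC_st (s : SCSP A) : ∀ P : PCSP A,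
    (echC P (.st s)).interp = dmap (fun t => .ech t s) P.interp
  | .st t => (dmap_dirac (fun u => SCSP.ech u s) t).symm
  | .pch p P₁ P₂ => by
      rw [echC, PCSP.interp_pch, PCSP.interp_pch, interp_echC_st s P₁, interp_echC_st s P₂,
        dmap_mul_add_mul _ (P₁.finite_dsupp_interp) (P₂.finite_dsupp_interp)]

lemma LeMay.st_ech_left (s t : SCSP A) : LeMay (.st s) (.st (.ech s t)) :=
  (ofEq (EqE.E1 (.st s)).symm).trans (congEch (ofEq (.refl _)) (may2 (.st t)))

lemma LeMay.st_ech_right (s t : SCSP A) : LeMay (.st t) (.st (.ech s t)) :=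
  (st_ech_left t s).trans (ofEq (EqE.E2 (.st t) (.st s)))

def AxDeriv : Option A → PCSP A → PCSP A → Prop
  | none, P, Q => LeMust P Q ∧ LeMay Q P
  | some a, P, Q => LeMay (.st (.pre a Q)) P

variable {α : Option A} {P Q R : PCSP A}

lemma AxDeriv.of_eqE (h : EqE P Q) : AxDeriv none P Q := ⟨.ofEq h, .ofEq h.symm⟩

lemma AxDeriv.none_trans (h : AxDeriv none P Q) (h' : AxDeriv α Q R) : AxDeriv α P R :=
  match α, h' with
  | none, h' => ⟨h.1.trans h'.1, h'.2.trans h.2⟩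
  | some _, h' => LeMay.trans h' h.2

lemma AxDeriv.trans_none (h : AxDeriv α P Q) (h' : AxDeriv none Q R) : AxDeriv α P R :=
  match α, h with
  | none, h => ⟨h.1.trans h'.1, h'.2.trans h.2⟩
  | some a, h => (LeMay.congPre a h'.2).trans h

lemma AxDeriv.comb {n : ℕ} {p : Fin n → ℝ} {P Q : Fin n → PCSP A} (hp : ∀ i, 0 ≤ p i)
    (hsum : 0 < ∑ i, p i) (h : ∀ i, p i ≠ 0 → AxDeriv α (P i) (Q i)) :
    AxDeriv α (comb n p P) (comb n p Q) :=
  match α, h with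
  | none, h =>
      ⟨comb_rel (fun _ => .ofEq (.refl _)) LeMust.congPch fun i hi => (h i hi).1,
        comb_rel (Rel := fun X Y => LeMay Y X) (fun _ => .ofEq (.refl _))
          (fun p _ _ _ _ h₁ h₂ => .congPch p h₁ h₂) fun i hi => (h i hi).2⟩
  | some a, h =>
      (LeMay.pre_comb a Q hp hsum).trans
        (comb_rel (fun _ => .ofEq (.refl _)) LeMay.congPch fun i hi => h i hi)

lemma exists_axDeriv_of_step {s : SCSP A} {Δ : Wt (SCSP A)} (h : Step s α Δ) (hs : SWF s)
    (hsn : SNoPar s) : ∃ T, PWF T ∧ PNoPar T ∧ T.interp = Δ ∧ AxDeriv α (.st s) T := by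
  induction h with
  | pre a P =>
      cases hs with | pre hP => cases hsn with | pre hPn =>
      exact ⟨P, hP, hPn, rfl, .ofEq (.refl _)⟩
  | ichL P Q =>
      cases hs with | ich hP _ => cases hsn with | ich hPn _ =>
      exact ⟨P, hP, hPn, rfl, (LeMust.ofEq (EqE.I2 P Q)).trans (.must1 Q P), .may1 P Q⟩
  | ichR P Q =>
      cases hs with | ich _ hQ => cases hsn with | ich _ hQn =>
      exact ⟨Q, hQ, hQn, rfl, .must1 P Q, (LeMay.may1 Q P).trans (.ofEq (EqE.I2 Q P))⟩
  | @echL s₁ s₂ _ _ _ ih =>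
      cases hs with | ech hs₁ _ => cases hsn with | ech hs₁n _ =>
      obtain ⟨T, hT, hTn, hTi, hd⟩ := ih hs₁ hs₁n
      exact ⟨T, hT, hTn, hTi, LeMay.trans hd (.st_ech_left s₁ s₂)⟩
  | @echR s₁ s₂ _ _ _ ih =>
      cases hs with | ech _ hs₂ => cases hsn with | ech _ hs₂n =>
      obtain ⟨T, hT, hTn, hTi, hd⟩ := ih hs₂ hs₂n
      exact ⟨T, hT, hTn, hTi, LeMay.trans hd (.st_ech_right s₁ s₂)⟩
  | @echTL s₁ s₂ _ _ ih =>
      cases hs with | ech hs₁ hs₂ => cases hsn with | ech hs₁n hs₂n =>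
      obtain ⟨T, hT, hTn, rfl, hd⟩ := ih hs₁ hs₁n
      exact ⟨echC T (.st s₂), hT.echC (.st hs₂), hTn.echC (.st hs₂n), interp_echC_st s₂ T,
        .congEch hd.1 (.ofEq (.refl (.st s₂))), .congEch hd.2 (.ofEq (.refl (.st s₂)))⟩
  | @echTR s₁ s₂ _ _ ih =>
      cases hs with | ech hs₁ hs₂ => cases hsn with | ech hs₁n hs₂n =>
      obtain ⟨T, hT, hTn, rfl, hd⟩ := ih hs₂ hs₂n
      exact ⟨echC (.st s₁) T, (PWF.st hs₁).echC hT, (PNoPar.st hs₁n).echC hTn,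
        interp_echCS s₁ T, .congEch (.ofEq (.refl (.st s₁))) hd.1,
        .congEch (.ofEq (.refl (.st s₁))) hd.2⟩
  | parL | parR | parS => cases hsn

lemma exists_axDeriv_of_stepTauHat {s : SCSP A} {Δ : Wt (SCSP A)} (h : stepTauHat s Δ)
    (hs : SWF s) (hsn : SNoPar s) :
    ∃ T, PWF T ∧ PNoPar T ∧ T.interp = Δ ∧ AxDeriv none (.st s) T := by
  rcases h with h | rfl
  · exact exists_axDeriv_of_step h hs hsn
  · exact ⟨.st s, .st hs, .st hsn, rfl, .of_eqE (.refl _)⟩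

lemma le_interp_of_eq_sum {n : ℕ} {p : Fin n → ℝ} {s : Fin n → SCSP A} (hp : ∀ i, 0 ≤ p i)
    (hP : P.interp = fun t => ∑ i, p i * dirac (s i) t) (i : Fin n) : p i ≤ P.interp (s i) := by
  rw [hP]
  simpa using Finset.single_le_sum (f := fun j => p j * dirac (s j) (s i))
    (fun j _ => mul_nonneg (hp j) (dirac_nonneg _ _)) (Finset.mem_univ i)

lemma exists_axDeriv_of_lift {Rel : SCSP A → Wt (SCSP A) → Prop}
    (hRel : ∀ {s Δ}, Rel s Δ → SWF s → SNoPar s →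
      ∃ T, PWF T ∧ PNoPar T ∧ T.interp = Δ ∧ AxDeriv α (.st s) T)
    {Θ : Wt (SCSP A)} (hP : PWF P) (hPn : PNoPar P) (h : Lift Rel P.interp Θ) :
    ∃ T, PWF T ∧ PNoPar T ∧ T.interp = Θ ∧ AxDeriv α P T := by
  obtain ⟨n, p, s, Φ, hp, hsum, hΔ, hRs, rfl⟩ := h
  have hmem : ∀ i, p i ≠ 0 → s i ∈ dsupp P.interp := fun i hi =>
    ((hp i).lt_of_ne' hi |>.trans_le (le_interp_of_eq_sum hp hΔ i)).ne'
  have hT : ∀ i, ∃ T, p i ≠ 0 →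
      PWF T ∧ PNoPar T ∧ T.interp = Φ i ∧ AxDeriv α (.st (s i)) T := fun i => by
    by_cases hi : p i = 0
    · exact ⟨.st .nil, fun h => absurd hi h⟩
    · obtain ⟨T, hT⟩ := hRel (hRs i) (hP.swf_of_mem_dsupp (hmem i hi))
        (hPn.snoPar_of_mem_dsupp (hmem i hi))
      exact ⟨T, fun _ => hT⟩
  choose T hT using hT
  have hinterp (Q : Fin n → PCSP A) (t : SCSP A) :
      (comb n p Q).interp t = ∑ i, p i * (Q i).interp t := by
    simpa [hsum] using interp_comb Q hp t
  have hPcomb : EqE P (comb n p fun i => .st (s i)) :=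
    eqE_of_interp_eq hP (.comb hp fun i hi => .st (hP.swf_of_mem_dsupp (hmem i hi)))
      (funext fun t => by rw [hinterp, hΔ]; rfl)
  refine ⟨comb n p T, .comb hp fun i hi => (hT i hi).1, .comb fun i hi => (hT i hi).2.1,
    funext fun t => ?_, (AxDeriv.of_eqE hPcomb).none_trans
      (.comb hp (hsum ▸ one_pos) fun i hi => (hT i hi).2.2.2)⟩
  rw [hinterp]
  refine Finset.sum_congr rfl fun i _ => ?_
  rcases eq_or_ne (p i) 0 with hi | hi
  · simp [hi]
  · rw [(hT i hi).2.2.1]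

lemma exists_axDeriv_of_tauStar {Θ : Wt (SCSP A)} (hP : PWF P) (hPn : PNoPar P)
    (h : TauStar P.interp Θ) : ∃ T, PWF T ∧ PNoPar T ∧ T.interp = Θ ∧ AxDeriv none P T := by
  induction h with
  | refl => exact ⟨P, hP, hPn, rfl, .of_eqE (.refl P)⟩
  | tail _ hstep ih =>
      obtain ⟨T, hT, hTn, rfl, hd⟩ := ih
      obtain ⟨T', hT'⟩ := exists_axDeriv_of_lift exists_axDeriv_of_stepTauHat hT hTn hstep
      exact ⟨T', hT'.1, hT'.2.1, hT'.2.2.1, hd.none_trans hT'.2.2.2⟩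

end Derivatives

/-- Derivative lemma. -/
theorem derivative_lemma (A : Type) [Fintype A] (P Q : PCSP A)
    (hPn : PNoPar P) (hQn : PNoPar Q) (hPw : PWF P) (hQw : PWF Q) :
    (TauStar P.interp Q.interp → LeMust P Q ∧ LeMay Q P) ∧
    (∀ a : A, WeakA a P.interp Q.interp → LeMay (.st (.pre a Q)) P) := by
  refine ⟨fun h => ?_, fun a h => ?_⟩
  · obtain ⟨T, hT, -, hTQ, hd⟩ := exists_axDeriv_of_tauStar hPw hPn h
    exact hd.trans_none (.of_eqE (eqE_of_interp_eq hT hQw hTQ))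
  · obtain ⟨Δ₁, Δ₂, h₁, h₂, h₃⟩ := h
    obtain ⟨T₁, hT₁, hT₁n, rfl, hd₁⟩ := exists_axDeriv_of_tauStar hPw hPn h₁
    obtain ⟨T₂, hT₂, hT₂n, rfl, hd₂⟩ :=
      exists_axDeriv_of_lift (fun h => exists_axDeriv_of_step h) hT₁ hT₁n h₂
    obtain ⟨T₃, hT₃, -, hT₃Q, hd₃⟩ := exists_axDeriv_of_tauStar hT₂ hT₂n h₃
    exact (hd₁.none_trans (hd₂.trans_none hd₃)).trans_none
      (.of_eqE (eqE_of_interp_eq hT₃ hQw hT₃Q))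

end PaperPCSP
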